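/- Let P be a set of n points in general position in the plane and let α₁, α₂ be real numbers with 0 < α₁ ≤ α₂ and α₁ + 2α₂ ≤ 1. Then there exist two points p₁ and p₂ in ℝ² such that (1) every closed halfplane containing at least one of p₁, p₂ contains at least α₁·n of the points of P, and (2) every closed halfplane containing both p₁ and p₂ contains at least α₂·n of the points of P. -/

import Mathlib

/-!
For a direction `v` and `k ≥ 1`, the points `x` such that every closed halfplane `⟪v, ·⟫ ≤ c`
containing `x` contains at least `k` points of `P` form a closed halfplane `H(v, k)`.
Fix `u ≠ 0`, put `k₁ = ⌈α₁ n⌉`, `k₂ = ⌈α₂ n⌉`, and take `H(v, k₂)` when `⟪v, u⟫ ≥ 0` and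
`H(v, k₁)` otherwise. By Helly's theorem these halfplanes have a common point `p₁` as soon as any
three of them meet. If one of the three is a `k₁`-halfplane, some point of `P` lies in all three,
since `H(v, k)` misses fewer than `k` points of `P` and `k₁ + 2 k₂ ≤ n + 2`. If all three are
`k₂`-halfplanes, they meet pairwise (as `2 k₂ ≤ n + 1`) and all recede in the direction `u`; in the
plane, pairwise intersecting convex sets with a common recession direction have a common point.
The same construction with `-u` gives `p₂`, and a halfplane containing both points has an outer
normal `v` with `⟪v, u⟫ ≥ 0` or `⟪v, -u⟫ ≥ 0`.
-/

open Finset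
open scoped RealInnerProductSpace

theorem Finset.exists_kth_smallest_value {α β : Type*} [LinearOrder β] (s : Finset α) (f : α → β)
    {k : ℕ} (hk₀ : 0 < k) (hk : k ≤ #s) :
    ∃ m, #{x ∈ s | f x < m} < k ∧ k ≤ #{x ∈ s | f x ≤ m} := by
  have hne : {x ∈ s | k ≤ #{y ∈ s | f y ≤ f x}}.Nonempty := by
    obtain ⟨x, hx, hmax⟩ := s.exists_max_image f (card_pos.mp (hk₀.trans_le hk))
    exact ⟨x, mem_filter.mpr ⟨hx, hk.trans_eq (congrArg card (filter_true_of_mem hmax).symm)⟩⟩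
  obtain ⟨x, hx, hmin⟩ := exists_min_image _ f hne
  refine ⟨f x, ?_, (mem_filter.mp hx).2⟩
  by_contra! hlarge
  obtain ⟨y, hy, hymax⟩ := exists_max_image {y ∈ s | f y < f x} f
    (card_pos.mp (hk₀.trans_le hlarge))
  have hyk : k ≤ #{z ∈ s | f z ≤ f y} :=
    hlarge.trans (card_le_card fun z hz => by
      simp only [mem_filter] at hz ⊢; exact ⟨hz.1, hymax z (mem_filter.mpr hz)⟩)
  have := hmin y (mem_filter.mpr ⟨(mem_filter.mp hy).1, hyk⟩)
  exact (mem_filter.mp hy).2.not_ge this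

section Depth

variable {E : Type*} [NormedAddCommGroup E] [InnerProductSpace ℝ E]

def DeepAlong (P : Finset E) (v : E) (k : ℕ) (x : E) : Prop :=
  ∀ c : ℝ, ⟪v, x⟫ ≤ c → k ≤ #{p ∈ P | ⟪v, p⟫ ≤ c}

variable {P : Finset E} {v u x : E} {k k' : ℕ}

theorem DeepAlong.mono (h : DeepAlong P v k' x) (hk : k ≤ k') : DeepAlong P v k x :=
  fun c hc => hk.trans (h c hc)

theorem DeepAlong.add_smul (h : DeepAlong P v k x) (hu : 0 ≤ ⟪v, u⟫) {t : ℝ} (ht : 0 ≤ t) :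
    DeepAlong P v k (x + t • u) := fun c hc =>
  h c (by rw [inner_add_right, real_inner_smul_right] at hc; nlinarith)

theorem exists_deepAlong_iff (P : Finset E) (v : E) (hk₀ : 0 < k) (hk : k ≤ #P) :
    ∃ m : ℝ, (∀ x, DeepAlong P v k x ↔ m ≤ ⟪v, x⟫) ∧ #{p ∈ P | ⟪v, p⟫ < m} < k := by
  obtain ⟨m, hlt, hle⟩ := P.exists_kth_smallest_value (⟪v, ·⟫) hk₀ hk
  refine ⟨m, fun x => ⟨fun h => ?_, fun h c hc => ?_⟩, hlt⟩
  · by_contra! hx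
    exact (h _ le_rfl).not_gt (hlt.trans_le' (card_le_card fun p hp => by
      simp only [mem_filter] at hp ⊢; exact ⟨hp.1, hp.2.trans_lt hx⟩))
  · exact hle.trans (card_le_card fun p hp => by
      simp only [mem_filter] at hp ⊢; exact ⟨hp.1, hp.2.trans (h.trans hc)⟩)

theorem isClosed_setOf_deepAlong (P : Finset E) (v : E) (hk₀ : 0 < k) (hk : k ≤ #P) :
    IsClosed {x | DeepAlong P v k x} := by
  obtain ⟨m, hm, -⟩ := exists_deepAlong_iff P v hk₀ hk
  simp_rw [hm]
  exact isClosed_le continuous_const (continuous_const.inner continuous_id)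

theorem convex_setOf_deepAlong (P : Finset E) (v : E) (hk₀ : 0 < k) (hk : k ≤ #P) :
    Convex ℝ {x | DeepAlong P v k x} := by
  obtain ⟨m, hm, -⟩ := exists_deepAlong_iff P v hk₀ hk
  simp_rw [hm]
  exact convex_halfSpace_ge (innerₛₗ ℝ v).isLinear m

open Classical in
theorem card_filter_not_deepAlong_lt (P : Finset E) (v : E) (hk₀ : 0 < k) :
    #{p ∈ P | ¬ DeepAlong P v k p} < k := by
  rcases le_or_gt k #P with hk | hk
  · obtain ⟨m, hm, hlt⟩ := exists_deepAlong_iff P v hk₀ hk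
    refine hlt.trans_le' (card_le_card fun p hp => ?_)
    simp only [mem_filter, hm, not_le] at hp ⊢
    exact hp
  · exact (card_filter_le _ _).trans_lt hk

theorem exists_mem_forall_deepAlong {ι : Type*} [Fintype ι] (P : Finset E) (v : ι → E)
    (k : ι → ℕ) (hk₀ : ∀ i, 0 < k i) (hsum : ∑ i, k i < #P + Fintype.card ι) :
    ∃ p ∈ P, ∀ i, DeepAlong P (v i) (k i) p := by
  classical
  set B := univ.biUnion fun i => {p ∈ P | ¬ DeepAlong P (v i) (k i) p}
  have hsub : ∑ i, (k i - 1) + Fintype.card ι = ∑ i, k i := by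
    rw [Fintype.card_eq_sum_ones, ← sum_add_distrib]
    exact sum_congr rfl fun i _ => Nat.sub_add_cancel (hk₀ i)
  have hB : #B < #P := calc
    #B ≤ ∑ i, #{p ∈ P | ¬ DeepAlong P (v i) (k i) p} := card_biUnion_le
    _ ≤ ∑ i, (k i - 1) := sum_le_sum fun i _ =>
        Nat.le_sub_one_of_lt (card_filter_not_deepAlong_lt P (v i) (hk₀ i))
    _ < #P := by omega
  obtain ⟨p, hpP, hpB⟩ := exists_mem_notMem_of_card_lt_card hB
  refine ⟨p, hpP, fun i => ?_⟩
  by_contra h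
  exact hpB (mem_biUnion.mpr ⟨i, mem_univ i, mem_filter.mpr ⟨hpP, h⟩⟩)

end Depth

section Helly

variable {ι α : Type*}

theorem biInter_nonempty_of_card_le_three [Nonempty ι] {F : ι → Set α}
    (h : ∀ a b c, (F a ∩ F b ∩ F c).Nonempty) (I : Finset ι) (hI : #I ≤ 3) :
    (⋂ i ∈ I, F i).Nonempty := by
  classical
  suffices ∃ a b c, I ⊆ {a, b, c} by
    obtain ⟨a, b, c, hI⟩ := this
    obtain ⟨x, ⟨hxa, hxb⟩, hxc⟩ := h a b c
    refine ⟨x, Set.mem_iInter₂.mpr fun i hi => ?_⟩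
    rcases mem_insert.mp (hI hi) with rfl | hi
    · exact hxa
    rcases mem_insert.mp hi with rfl | hi
    · exact hxb
    · rwa [mem_singleton.mp hi]
  interval_cases h3 : #I
  · obtain ⟨a⟩ := ‹Nonempty ι›
    exact ⟨a, a, a, by simp [card_eq_zero.mp h3]⟩
  · obtain ⟨a, rfl⟩ := card_eq_one.mp h3
    exact ⟨a, a, a, by simp⟩
  · obtain ⟨a, b, -, rfl⟩ := card_eq_two.mp h3
    exact ⟨a, b, b, by simp⟩
  · obtain ⟨a, b, c, -, -, -, rfl⟩ := card_eq_three.mp h3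
    exact ⟨a, b, c, subset_refl _⟩

variable {E : Type*} [NormedAddCommGroup E] [NormedSpace ℝ E] [FiniteDimensional ℝ E]

theorem Convex.helly_theorem_of_isCompact_biInter {F : ι → Set E} (h_convex : ∀ i, Convex ℝ (F i))
    (h_closed : ∀ i, IsClosed (F i)) {s : Finset ι} (hs : IsCompact (⋂ i ∈ s, F i))
    (h_inter : ∀ I : Finset ι, #I ≤ Module.finrank ℝ E + 1 → (⋂ i ∈ I, F i).Nonempty) :
    (⋂ i, F i).Nonempty := by
  classical
  set K := ⋂ i ∈ s, F i
  have hK : Convex ℝ K := convex_iInter₂ fun i _ => h_convex i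
  obtain ⟨x, hx⟩ : (⋂ i, F i ∩ K).Nonempty := by
    refine Convex.helly_theorem_compact' (fun i => (h_convex i).inter hK)
      (fun i => hs.inter_left (h_closed i)) fun I _ => ?_
    obtain ⟨x, hx⟩ := Convex.helly_theorem' (s := I ∪ s) (fun i _ => h_convex i)
      fun J _ hJ => h_inter J hJ
    simp only [Set.mem_iInter, mem_union] at hx
    exact ⟨x, Set.mem_iInter₂.mpr fun i hi =>
      ⟨hx i (.inl hi), Set.mem_iInter₂.mpr fun j hj => hx j (.inr hj)⟩⟩
  exact ⟨x, Set.mem_iInter.mpr fun i => (Set.mem_iInter.mp hx i).1⟩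

end Helly

section Recession

variable {E : Type*} [AddCommGroup E] [Module ℝ E]

def IsRecessionDir (S : Set E) (u : E) : Prop := ∀ x ∈ S, ∀ t : ℝ, 0 ≤ t → x + t • u ∈ S

theorem IsRecessionDir.inter {S T : Set E} {u : E} (hS : IsRecessionDir S u)
    (hT : IsRecessionDir T u) : IsRecessionDir (S ∩ T) u :=
  fun x hx t ht => ⟨hS x hx.1 t ht, hT x hx.2 t ht⟩

variable {φ : E →ₗ[ℝ] ℝ} {u : E}

-- The point `q ∈ [y, z]` with `φ q = φ x` lies on the line `x + ℝ u`: if it is above `x` it is in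
-- `K`, otherwise `x` is in `R`.
theorem inter_nonempty_of_apply_mem_uIcc (hφ : LinearMap.ker φ ≤ ℝ ∙ u) {R K : Set E}
    (hR : Convex ℝ R) (hRu : IsRecessionDir R u) (hKu : IsRecessionDir K u) {x y z : E}
    (hx : x ∈ K) (hy : y ∈ R) (hz : z ∈ R) (hxyz : φ x ∈ Set.uIcc (φ y) (φ z)) :
    (R ∩ K).Nonempty := by
  obtain ⟨q, hq, hqx⟩ : φ x ∈ φ '' segment ℝ y z := by
    rwa [show φ '' segment ℝ y z = _ from image_segment ℝ φ.toAffineMap y z, segment_eq_uIcc]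
  obtain ⟨t, ht⟩ := Submodule.mem_span_singleton.mp
    (hφ (show q - x ∈ LinearMap.ker φ by simpa [sub_eq_zero] using hqx))
  have hqR : q ∈ R := hR.segment_subset hy hz hq
  rcases le_total 0 t with ht₀ | ht₀
  · exact ⟨q, hqR, by simpa [ht] using hKu x hx t ht₀⟩
  · exact ⟨x, by simpa [ht] using hRu q hqR (-t) (neg_nonneg.mpr ht₀), hx⟩

theorem inter_inter_nonempty_of_isRecessionDir (hφ : LinearMap.ker φ ≤ ℝ ∙ u)
    {A B C : Set E} (hA : Convex ℝ A) (hB : Convex ℝ B) (hC : Convex ℝ C)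
    (hAu : IsRecessionDir A u) (hBu : IsRecessionDir B u) (hCu : IsRecessionDir C u)
    (hAB : (A ∩ B).Nonempty) (hAC : (A ∩ C).Nonempty) (hBC : (B ∩ C).Nonempty) :
    (A ∩ B ∩ C).Nonempty := by
  obtain ⟨c, hc⟩ := hAB
  obtain ⟨b, hb⟩ := hAC
  obtain ⟨a, ha⟩ := hBC
  have hmed : φ a ∈ Set.uIcc (φ b) (φ c) ∨ φ b ∈ Set.uIcc (φ a) (φ c) ∨
      φ c ∈ Set.uIcc (φ a) (φ b) := by
    simp only [Set.mem_uIcc]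
    rcases le_total (φ a) (φ b) with h₁ | h₁ <;> rcases le_total (φ b) (φ c) with h₂ | h₂ <;>
      rcases le_total (φ a) (φ c) with h₃ | h₃ <;> tauto
  rcases hmed with h | h | h
  · exact (inter_nonempty_of_apply_mem_uIcc hφ hA hAu (hBu.inter hCu) ha hb.1 hc.1 h).mono
      fun p hp => ⟨⟨hp.1, hp.2.1⟩, hp.2.2⟩
  · exact (inter_nonempty_of_apply_mem_uIcc hφ hB hBu (hAu.inter hCu) hb ha.1 hc.2 h).mono
      fun p hp => ⟨⟨hp.2.1, hp.1⟩, hp.2.2⟩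
  · exact (inter_nonempty_of_apply_mem_uIcc hφ hC hCu (hAu.inter hBu) hc ha.2 hb.2 h).mono
      fun p hp => ⟨hp.2, hp.1⟩

end Recession

theorem EuclideanSpace.exists_ker_le_span_singleton {u : EuclideanSpace ℝ (Fin 2)} (hu : u ≠ 0) :
    ∃ φ : EuclideanSpace ℝ (Fin 2) →ₗ[ℝ] ℝ, LinearMap.ker φ ≤ ℝ ∙ u := by
  refine ⟨u 0 • (EuclideanSpace.proj 1 : EuclideanSpace ℝ (Fin 2) →L[ℝ] ℝ).toLinearMap -
    u 1 • (EuclideanSpace.proj 0 : EuclideanSpace ℝ (Fin 2) →L[ℝ] ℝ).toLinearMap, fun x hx => ?_⟩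
  replace hx : u 0 * x 1 = u 1 * x 0 := by simpa [sub_eq_zero] using hx
  rw [Submodule.mem_span_singleton]
  by_cases h₀ : u 0 = 0
  · have h₁ : u 1 ≠ 0 := fun h₁ => hu (by ext i; fin_cases i <;> simp [h₀, h₁])
    refine ⟨x 1 / u 1, ?_⟩
    ext i; fin_cases i
    · simp [h₀] at hx ⊢; tauto
    · simp [h₁]
  · refine ⟨x 0 / u 0, ?_⟩
    ext i; fin_cases i
    · simp [h₀]
    · simp; field_simp; linarith

theorem EuclideanSpace.isCompact_setOf_deepAlong_single {ι : Type*} [Fintype ι] [DecidableEq ι]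
    (P : Finset (EuclideanSpace ℝ ι)) {k : ℕ} (hk₀ : 0 < k) (hk : k ≤ #P) :
    IsCompact {x | ∀ i, DeepAlong P (single i 1) k x ∧ DeepAlong P (-single i 1) k x} := by
  choose a ha using fun i =>
    (exists_deepAlong_iff P (single i (1 : ℝ)) hk₀ hk).imp fun _ => And.left
  choose b hb using fun i =>
    (exists_deepAlong_iff P (-single i (1 : ℝ)) hk₀ hk).imp fun _ => And.left
  have hbox : {x | ∀ i, DeepAlong P (single i 1) k x ∧ DeepAlong P (-single i 1) k x} =
      EuclideanSpace.equiv ι ℝ ⁻¹' Set.Icc a (-b) := by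
    ext x
    simp [ha, hb, Pi.le_def, forall_and, le_neg, EuclideanSpace.inner_single_left]
  rw [hbox]
  exact (EuclideanSpace.equiv ι ℝ).toHomeomorph.isCompact_preimage.mpr isCompact_Icc

theorem EuclideanSpace.exists_forall_deepAlong {ι : Type*} [Fintype ι] [DecidableEq ι]
    (P : Finset (EuclideanSpace ℝ ι)) (κ : EuclideanSpace ℝ ι → ℕ) (hκ₀ : ∀ v, 0 < κ v)
    (hκ : ∀ v, κ v ≤ #P)
    (h_inter : ∀ I : Finset (EuclideanSpace ℝ ι), #I ≤ Fintype.card ι + 1 →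
      (⋂ v ∈ I, {x | DeepAlong P v (κ v) x}).Nonempty) :
    ∃ p, ∀ v, DeepAlong P v (κ v) p := by
  set box : Finset (EuclideanSpace ℝ ι) :=
    univ.image (fun i => single i 1) ∪ univ.image (fun i => -single i 1)
  have hbox : IsCompact (⋂ v ∈ box, {x | DeepAlong P v (κ v) x}) := by
    refine (isCompact_setOf_deepAlong_single P one_pos ((hκ₀ 0).trans_le (hκ 0))).of_isClosed_subset
      (isClosed_biInter fun v _ => isClosed_setOf_deepAlong P v (hκ₀ v) (hκ v)) fun x hx => ?_
    simp only [Set.mem_iInter] at hx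
    exact fun i => ⟨(hx _ (by simp [box])).mono (hκ₀ _), (hx _ (by simp [box])).mono (hκ₀ _)⟩
  obtain ⟨p, hp⟩ := Convex.helly_theorem_of_isCompact_biInter
    (fun v => convex_setOf_deepAlong P v (hκ₀ v) (hκ v))
    (fun v => isClosed_setOf_deepAlong P v (hκ₀ v) (hκ v)) hbox
    fun I hI => h_inter I (by simpa using hI)
  exact ⟨p, Set.mem_iInter.mp hp⟩

theorem exists_deepAlong_of_add_two_mul_le (P : Finset (EuclideanSpace ℝ (Fin 2)))
    {u : EuclideanSpace ℝ (Fin 2)} (hu : u ≠ 0) {k₁ k₂ : ℕ} (hk₁ : 0 < k₁) (hk₁₂ : k₁ ≤ k₂)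
    (hsum : k₁ + 2 * k₂ ≤ #P + 2) :
    ∃ p, ∀ v, DeepAlong P v k₁ p ∧ (0 ≤ ⟪v, u⟫ → DeepAlong P v k₂ p) := by
  set κ : EuclideanSpace ℝ (Fin 2) → ℕ := fun v => if 0 ≤ ⟪v, u⟫ then k₂ else k₁
  have hκ₀ : ∀ v, 0 < κ v := fun v => by simp only [κ]; split_ifs <;> omega
  have hκ : ∀ v, κ v ≤ #P := fun v => by simp only [κ]; split_ifs <;> omega
  set F := fun v => {x | DeepAlong P v (κ v) x}
  have hconv : ∀ v, Convex ℝ (F v) := fun v => convex_setOf_deepAlong P v (hκ₀ v) (hκ v)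
  have hpair : ∀ v w, (F v ∩ F w).Nonempty := fun v w => by
    obtain ⟨p, -, hp⟩ := exists_mem_forall_deepAlong P ![v, w] ![κ v, κ w]
      (by simp [Fin.forall_fin_two, hκ₀])
      (by simp only [Fin.sum_univ_two, κ]; split_ifs <;> simp <;> omega)
    exact ⟨p, by simpa [F, Fin.forall_fin_two] using hp⟩
  have htriple : ∀ a b c, (F a ∩ F b ∩ F c).Nonempty := by
    intro a b c
    by_cases hup : 0 ≤ ⟪a, u⟫ ∧ 0 ≤ ⟪b, u⟫ ∧ 0 ≤ ⟪c, u⟫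
    · have hrec : ∀ v, 0 ≤ ⟪v, u⟫ → IsRecessionDir (F v) u :=
        fun v hv x hx t ht => DeepAlong.add_smul hx hv ht
      obtain ⟨φ, hφ⟩ := EuclideanSpace.exists_ker_le_span_singleton hu
      exact inter_inter_nonempty_of_isRecessionDir hφ (hconv a) (hconv b) (hconv c)
        (hrec a hup.1) (hrec b hup.2.1) (hrec c hup.2.2) (hpair a b) (hpair a c) (hpair b c)
    · have hsum₃ : κ a + κ b + κ c < #P + 3 := by
        simp only [κ]
        split_ifs <;> first | omega | exact absurd ⟨‹_›, ‹_›, ‹_›⟩ hup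
      obtain ⟨p, -, hp⟩ := exists_mem_forall_deepAlong P ![a, b, c] ![κ a, κ b, κ c]
        (by simp [Fin.forall_fin_succ, hκ₀]) (by simpa [Fin.sum_univ_three] using hsum₃)
      exact ⟨p, by simpa [F, Fin.forall_fin_succ, and_assoc] using hp⟩
  obtain ⟨p, hp⟩ := EuclideanSpace.exists_forall_deepAlong P κ hκ₀ hκ fun I hI =>
    biInter_nonempty_of_card_le_three htriple I (by simpa using hI)
  refine ⟨p, fun v => ⟨(hp v).mono ?_, fun hv => by simpa [κ, hv] using hp v⟩⟩
  simp only [κ]; split_ifs <;> omega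

theorem Nat.ceil_add_two_mul_ceil_le {a b : ℝ} (ha : 0 ≤ a) (hb : 0 ≤ b) (hab : a + 2 * b ≤ 1)
    (n : ℕ) : ⌈a * n⌉₊ + 2 * ⌈b * n⌉₊ ≤ n + 2 := by
  have ha' := Nat.ceil_lt_add_one (mul_nonneg ha n.cast_nonneg)
  have hb' := Nat.ceil_lt_add_one (mul_nonneg hb n.cast_nonneg)
  have : ((⌈a * n⌉₊ + 2 * ⌈b * n⌉₊ : ℕ) : ℝ) < n + 3 := by push_cast; nlinarith
  exact Nat.le_of_lt_succ (by exact_mod_cast this)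

theorem two_points_plane_general_general (n : ℕ) (P : Finset (EuclideanSpace ℝ (Fin 2)))
    (hcard : P.card = n)
    (α₁ α₂ : ℝ) (h₁ : 0 < α₁) (h₁₂ : α₁ ≤ α₂) (hsum : α₁ + 2 * α₂ ≤ 1) :
    ∃ p₁ p₂ : EuclideanSpace ℝ (Fin 2),
      (∀ (v : EuclideanSpace ℝ (Fin 2)) (c : ℝ), v ≠ 0 →
        ((inner ℝ v p₁ : ℝ) ≤ c ∨ (inner ℝ v p₂ : ℝ) ≤ c) →
        α₁ * n ≤ (P.filter (fun x => (inner ℝ v x : ℝ) ≤ c)).card) ∧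
      (∀ (v : EuclideanSpace ℝ (Fin 2)) (c : ℝ), v ≠ 0 →
        (inner ℝ v p₁ : ℝ) ≤ c → (inner ℝ v p₂ : ℝ) ≤ c →
        α₂ * n ≤ (P.filter (fun x => (inner ℝ v x : ℝ) ≤ c)).card) := by
  obtain rfl | hn := n.eq_zero_or_pos
  · exact ⟨0, 0, fun _ _ _ _ => by simp, fun _ _ _ _ _ => by simp⟩
  have hk₁ : 0 < ⌈α₁ * n⌉₊ := Nat.ceil_pos.mpr (by positivity)
  have hk₁₂ : ⌈α₁ * n⌉₊ ≤ ⌈α₂ * n⌉₊ := Nat.ceil_mono (by gcongr)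
  have hk : ⌈α₁ * n⌉₊ + 2 * ⌈α₂ * n⌉₊ ≤ #P + 2 :=
    hcard ▸ Nat.ceil_add_two_mul_ceil_le h₁.le (h₁.le.trans h₁₂) hsum n
  set u : EuclideanSpace ℝ (Fin 2) := EuclideanSpace.single 0 1
  have hu : u ≠ 0 := by simp [u]
  obtain ⟨p₁, hp₁⟩ := exists_deepAlong_of_add_two_mul_le P hu hk₁ hk₁₂ hk
  obtain ⟨p₂, hp₂⟩ := exists_deepAlong_of_add_two_mul_le P (neg_ne_zero.mpr hu) hk₁ hk₁₂ hk
  refine ⟨p₁, p₂, fun v c _ hc => (Nat.le_ceil _).trans ?_,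
    fun v c _ hc₁ hc₂ => (Nat.le_ceil _).trans ?_⟩
  · rcases hc with hc | hc
    exacts [mod_cast (hp₁ v).1 c hc, mod_cast (hp₂ v).1 c hc]
  · rcases le_total 0 ⟪v, u⟫ with h | h
    · exact mod_cast (hp₁ v).2 h c hc₁
    · exact mod_cast (hp₂ v).2 (by rwa [inner_neg_right, neg_nonneg]) c hc₂

/-- For any finite set `P` of `n` points in general position in the plane
and reals `0 < α₁ ≤ α₂` with `α₁ + 2α₂ ≤ 1`, there are two points `p₁, p₂ ∈ ℝ²` such that
every closed halfplane containing at least one of them contains at least `α₁·n` points of `P`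
and every closed halfplane containing both contains at least `α₂·n` points of `P`. -/
theorem two_points_plane_general (n : ℕ) (P : Finset (EuclideanSpace ℝ (Fin 2)))
    (hcard : P.card = n)
    (hgp : ∀ p₁ ∈ P, ∀ p₂ ∈ P, ∀ p₃ ∈ P, p₁ ≠ p₂ → p₁ ≠ p₃ → p₂ ≠ p₃ →
      ¬ Collinear ℝ ({p₁, p₂, p₃} : Set (EuclideanSpace ℝ (Fin 2))))
    (α₁ α₂ : ℝ) (h₁ : 0 < α₁) (h₁₂ : α₁ ≤ α₂) (hsum : α₁ + 2 * α₂ ≤ 1) :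
    ∃ p₁ p₂ : EuclideanSpace ℝ (Fin 2),
      (∀ (v : EuclideanSpace ℝ (Fin 2)) (c : ℝ), v ≠ 0 →
        ((inner ℝ v p₁ : ℝ) ≤ c ∨ (inner ℝ v p₂ : ℝ) ≤ c) →
        α₁ * n ≤ (P.filter (fun x => (inner ℝ v x : ℝ) ≤ c)).card) ∧
      (∀ (v : EuclideanSpace ℝ (Fin 2)) (c : ℝ), v ≠ 0 →
        (inner ℝ v p₁ : ℝ) ≤ c → (inner ℝ v p₂ : ℝ) ≤ c →
        α₂ * n ≤ (P.filter (fun x => (inner ℝ v x : ℝ) ≤ c)).card) :=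
  two_points_plane_general_general n P hcard α₁ α₂ h₁ h₁₂ hsum
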